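/- Let ε > 0 and let (x, y) : [0, ∞) → ℝ² be a global differentiable solution of x'(t) = (1 − x(t)²)(x(t) − y(t)), y'(t) = ε·x(t) with |x(0)| > 1. Then the orbit is asymptotic to the line y = x: lim_{t → ∞} (y(t) − x(t)) = 0. -/

import Mathlib

/-!
Write `u = y - x`, so that `x' = (x² - 1) u` and `u' = ε x - (x² - 1) u`. The line `x = 1` is
invariant, so `x > 1` forever. While `u < 0` it grows at rate at least `ε`, and once `u ≥ 0` it
stays so, because `u' = ε x > 0` on `u = 0`. Then `x` is nondecreasing, and it is unbounded: were
it bounded, `u ≥ y - sup x` would grow linearly with `y`, and so would `x`. Finally, on `u ≥ δ`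
the damping `(x² - 1) δ` eventually beats the forcing `ε x`, so `u` falls below `δ` and never
returns.
-/

open Real Set Filter Topology

section Calculus

variable {f f' : ℝ → ℝ} {a : ℝ}

theorem monotoneOn_Ici_of_hasDerivAt_nonneg (hf : ∀ t ∈ Ici a, HasDerivAt f (f' t) t)
    (hf' : ∀ t ∈ Ioi a, 0 ≤ f' t) : MonotoneOn f (Ici a) :=
  monotoneOn_of_hasDerivWithinAt_nonneg (convex_Ici a)
    (fun t ht => (hf t ht).continuousAt.continuousWithinAt)
    (fun t ht => (hf t (interior_subset ht)).hasDerivWithinAt)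
    (fun t ht => hf' t (by rwa [interior_Ici] at ht))

theorem tendsto_atTop_of_hasDerivAt_ge {c : ℝ} (hc : 0 < c)
    (hf : ∀ t ∈ Ici a, HasDerivAt f (f' t) t) (hf' : ∀ t ∈ Ioi a, c ≤ f' t) :
    Tendsto f atTop atTop := by
  have hmono : MonotoneOn (fun t => f t - c * t) (Ici a) :=
    monotoneOn_Ici_of_hasDerivAt_nonneg
      (fun t ht => ((hf t ht).sub ((hasDerivAt_id t).const_mul c)).congr_deriv (by simp))
      (fun t ht => sub_nonneg.2 (hf' t ht))
  have hlin : Tendsto (fun t => f a - c * a + c * t) atTop atTop :=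
    tendsto_atTop_add_const_left _ _ (tendsto_id.const_mul_atTop hc)
  refine tendsto_atTop_mono' atTop ?_ hlin
  filter_upwards [eventually_ge_atTop a] with t ht
  have := hmono self_mem_Ici ht ht
  simp only at this
  linarith

theorem le_const_of_hasDerivAt_neg_of_eq {c : ℝ} (hf : ∀ t ∈ Ici a, HasDerivAt f (f' t) t)
    (ha : f a ≤ c) (hc : ∀ t ∈ Ici a, f t = c → f' t < 0) : ∀ t ∈ Ici a, f t ≤ c :=
  fun b hb => image_le_of_deriv_right_lt_deriv_boundary' (b := b) (B := fun _ => c)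
    (fun t ht => (hf t ht.1).continuousAt.continuousWithinAt)
    (fun t ht => (hf t ht.1).hasDerivWithinAt) ha continuousOn_const
    (fun t _ => hasDerivWithinAt_const t _ c) (fun t ht => hc t ht.1) ⟨hb, le_rfl⟩

theorem eventually_le_of_hasDerivAt_le_neg {m δ κ : ℝ} (hκ : 0 < κ)
    (hf : ∀ t ∈ Ici a, HasDerivAt f (f' t) t) (hm : ∀ t ∈ Ici a, m ≤ f t)
    (hf' : ∀ t ∈ Ici a, δ ≤ f t → f' t ≤ -κ) : ∀ᶠ t in atTop, f t ≤ δ := by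
  obtain ⟨T, hTa, hT⟩ : ∃ T ∈ Ici a, f T ≤ δ := by
    by_contra! h
    have hneg : Tendsto (fun t => -f t) atTop atTop :=
      tendsto_atTop_of_hasDerivAt_ge hκ (fun t ht => (hf t ht).neg)
        (fun t ht => le_neg.2 (hf' t (Ioi_subset_Ici_self ht) (h t (Ioi_subset_Ici_self ht)).le))
    obtain ⟨t, hlt, ht⟩ := ((hneg.eventually_gt_atTop (-m)).and (eventually_ge_atTop a)).exists
    linarith [hm t ht]
  refine eventually_atTop.2 ⟨T, le_const_of_hasDerivAt_neg_of_eq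
    (fun t ht => hf t (Ici_subset_Ici.2 hTa ht)) hT fun t ht heq => ?_⟩
  linarith [hf' t (Ici_subset_Ici.2 hTa ht) heq.ge]

theorem pos_of_hasDerivAt_eq_mul {g : ℝ → ℝ}
    (hf : ∀ t ∈ Ici a, HasDerivAt f (g t * f t) t) (hg : ContinuousOn g (Ici a))
    (ha : 0 < f a) : ∀ t ∈ Ici a, 0 < f t := by
  intro b hb
  obtain ⟨C, hC⟩ := (isCompact_Icc (a := a) (b := b)).exists_bound_of_continuousOn
    (hg.mono Icc_subset_Ici_self)
  -- `(f²)' = 2 g f² ≥ -2 C f²`, so the weight `exp (2 C t)` makes `f²` nondecreasing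
  have hderiv : ∀ t ∈ Icc a b, HasDerivAt (fun t => f t ^ 2 * exp (2 * C * t))
      (2 * f t ^ 2 * (g t + C) * exp (2 * C * t)) t := fun t ht =>
    (((hf t ht.1).pow 2).mul (((hasDerivAt_id t).const_mul (2 * C)).exp)).congr_deriv (by
      simp only [id, Nat.cast_ofNat, Pi.pow_apply]; ring)
  have hmono : MonotoneOn (fun t => f t ^ 2 * exp (2 * C * t)) (Icc a b) := by
    refine monotoneOn_of_hasDerivWithinAt_nonneg (convex_Icc a b)
      (f' := fun t => 2 * f t ^ 2 * (g t + C) * exp (2 * C * t))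
      (fun t ht => (hderiv t ht).continuousAt.continuousWithinAt)
      (fun t ht => (hderiv t (interior_subset ht)).hasDerivWithinAt) (fun t ht => ?_)
    rw [interior_Icc] at ht
    have : 0 ≤ g t + C := by
      linarith [neg_le_of_abs_le ((norm_eq_abs _).symm.trans_le (hC t (Ioo_subset_Icc_self ht)))]
    positivity
  have hne : ∀ t ∈ Icc a b, f t ≠ 0 := fun t ht h0 => by
    have := hmono (left_mem_Icc.2 hb) ht ht.1
    have hpos : 0 < f a ^ 2 * exp (2 * C * a) := by positivity
    norm_num [h0] at this
    linarith
  by_contra! hfb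
  obtain ⟨s, hs, hfs⟩ := intermediate_value_Icc' hb
    (fun t ht => (hf t ht.1).continuousAt.continuousWithinAt) ⟨hfb, ha.le⟩
  exact hne s hs hfs

end Calculus

structure IsForwardSolution (ε : ℝ) (x y : ℝ → ℝ) : Prop where
  hasDerivAt_x : ∀ t ∈ Ici (0 : ℝ), HasDerivAt x ((1 - x t ^ 2) * (x t - y t)) t
  hasDerivAt_y : ∀ t ∈ Ici (0 : ℝ), HasDerivAt y (ε * x t) t

namespace IsForwardSolution

variable {ε : ℝ} {x y : ℝ → ℝ}

theorem neg (hs : IsForwardSolution ε x y) :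
    IsForwardSolution ε (fun t => -x t) (fun t => -y t) where
  hasDerivAt_x t ht := (hs.hasDerivAt_x t ht).neg.congr_deriv (by ring)
  hasDerivAt_y t ht := (hs.hasDerivAt_y t ht).neg.congr_deriv (by ring)

theorem hasDerivAt_gap (hs : IsForwardSolution ε x y) (t : ℝ) (ht : t ∈ Ici 0) :
    HasDerivAt (fun t => y t - x t) (ε * x t - (x t ^ 2 - 1) * (y t - x t)) t :=
  ((hs.hasDerivAt_y t ht).sub (hs.hasDerivAt_x t ht)).congr_deriv (by ring)

theorem continuousOn_x (hs : IsForwardSolution ε x y) : ContinuousOn x (Ici 0) :=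
  fun t ht => (hs.hasDerivAt_x t ht).continuousAt.continuousWithinAt

theorem continuousOn_y (hs : IsForwardSolution ε x y) : ContinuousOn y (Ici 0) :=
  fun t ht => (hs.hasDerivAt_y t ht).continuousAt.continuousWithinAt

theorem one_lt_x (hs : IsForwardSolution ε x y) (h0 : 1 < x 0) : ∀ t ∈ Ici 0, 1 < x t := by
  have hpos := pos_of_hasDerivAt_eq_mul (f := fun t => x t - 1)
    (g := fun t => (1 + x t) * (y t - x t))
    (fun t ht => ((hs.hasDerivAt_x t ht).sub_const 1).congr_deriv (by ring))
    ((continuousOn_const.add hs.continuousOn_x).mul (hs.continuousOn_y.sub hs.continuousOn_x))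
    (sub_pos.2 h0)
  exact fun t ht => sub_pos.1 (hpos t ht)

theorem exists_forall_gap_nonneg (hε : 0 < ε) (hs : IsForwardSolution ε x y) (h0 : 1 < x 0) :
    ∃ T ∈ Ici (0 : ℝ), ∀ t ∈ Ici T, 0 ≤ y t - x t := by
  have hx1 := hs.one_lt_x h0
  obtain ⟨T, hT0, hT⟩ : ∃ T ∈ Ici (0 : ℝ), 0 ≤ y T - x T := by
    by_contra! h
    have hgap : Tendsto (fun t => y t - x t) atTop atTop :=
      tendsto_atTop_of_hasDerivAt_ge hε hs.hasDerivAt_gap fun t ht => by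
        have hxt := hx1 t (Ioi_subset_Ici_self ht)
        have hdamp : 0 ≤ (x t ^ 2 - 1) * (x t - y t) :=
          mul_nonneg (by nlinarith) (by linarith [h t (Ioi_subset_Ici_self ht)])
        nlinarith [lt_mul_of_one_lt_right hε hxt]
    obtain ⟨t, hle, ht⟩ := ((hgap.eventually_ge_atTop 0).and (eventually_ge_atTop 0)).exists
    linarith [h t ht]
  -- on `y = x` the gap has derivative `ε x > 0`
  refine ⟨T, hT0, fun t ht => sub_nonneg.2 ?_⟩
  refine sub_nonpos.1 (le_const_of_hasDerivAt_neg_of_eq (f := fun t => x t - y t)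
    (fun t ht => (hs.hasDerivAt_x t (Ici_subset_Ici.2 hT0 ht)).sub
      (hs.hasDerivAt_y t (Ici_subset_Ici.2 hT0 ht))) (by linarith) (fun t ht heq => ?_) t ht)
  rw [heq, mul_zero, zero_sub, neg_neg_iff_pos]
  exact mul_pos hε (zero_lt_one.trans (hx1 t (Ici_subset_Ici.2 hT0 ht)))

theorem tendsto_x_atTop (hε : 0 < ε) (hs : IsForwardSolution ε x y) (h0 : 1 < x 0) :
    Tendsto x atTop atTop := by
  have hx1 := hs.one_lt_x h0
  obtain ⟨T, hT0, hgap⟩ := hs.exists_forall_gap_nonneg hε h0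
  have hx' : ∀ t ∈ Ici T, HasDerivAt x ((1 - x t ^ 2) * (x t - y t)) t :=
    fun t ht => hs.hasDerivAt_x t (Ici_subset_Ici.2 hT0 ht)
  have hmono : MonotoneOn x (Ici T) :=
    monotoneOn_Ici_of_hasDerivAt_nonneg hx' fun t ht => by
      have hxt := hx1 t (Ici_subset_Ici.2 hT0 (Ioi_subset_Ici_self ht))
      rw [show (1 - x t ^ 2) * (x t - y t) = (x t ^ 2 - 1) * (y t - x t) by ring]
      exact mul_nonneg (by nlinarith) (hgap t (Ioi_subset_Ici_self ht))
  by_contra hunb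
  obtain ⟨B, hB⟩ : ∃ B, ∀ t ∈ Ici T, x t < B := by
    by_contra! h
    refine hunb (tendsto_atTop_atTop.2 fun B => ?_)
    obtain ⟨s, hs, hBs⟩ := h B
    exact ⟨s, fun t ht => hBs.trans (hmono hs (Ici_subset_Ici.2 hs ht) ht)⟩
  -- `y` grows linearly, so the gap `y - x ≥ y - B` eventually exceeds `1`, and then
  -- `x' = (x² - 1) (y - x) ≥ x T ^ 2 - 1 > 0`
  have hy : Tendsto y atTop atTop :=
    tendsto_atTop_of_hasDerivAt_ge hε hs.hasDerivAt_y fun t ht =>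
      le_mul_of_one_le_right hε.le (hx1 t (Ioi_subset_Ici_self ht)).le
  obtain ⟨T', hT'⟩ := eventually_atTop.1 (hy.eventually_ge_atTop (B + 1))
  have hxT := hx1 T hT0
  have hc : 0 < x T ^ 2 - 1 := by nlinarith
  have hgrow : Tendsto x atTop atTop :=
    tendsto_atTop_of_hasDerivAt_ge (a := max T T') hc
      (fun t ht => hx' t (Ici_subset_Ici.2 (le_max_left T T') ht)) fun t ht => by
        have htT : t ∈ Ici T := Ici_subset_Ici.2 (le_max_left T T') (Ioi_subset_Ici_self ht)
        have hxt := hmono self_mem_Ici htT htT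
        have hyt := hT' t (le_max_right T T' |>.trans (Ioi_subset_Ici_self ht))
        have hsq : x T ^ 2 - 1 ≤ x t ^ 2 - 1 := by nlinarith
        nlinarith [hB t htT]
  obtain ⟨t, hlt, ht⟩ := ((hgrow.eventually_gt_atTop B).and (eventually_ge_atTop T)).exists
  exact (hB t ht).not_gt hlt

theorem eventually_gap_le (hε : 0 < ε) (hs : IsForwardSolution ε x y) (h0 : 1 < x 0) {δ : ℝ}
    (hδ : 0 < δ) : ∀ᶠ t in atTop, y t - x t ≤ δ := by
  obtain ⟨T, hT0, hgap⟩ := hs.exists_forall_gap_nonneg hε h0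
  obtain ⟨T', hT'⟩ :=
    eventually_atTop.1 ((hs.tendsto_x_atTop hε h0).eventually_ge_atTop ((2 * ε + δ) / δ))
  have hT : Ici (max T T') ⊆ Ici T := Ici_subset_Ici.2 (le_max_left T T')
  refine eventually_le_of_hasDerivAt_le_neg hε
    (fun t ht => hs.hasDerivAt_gap t (Ici_subset_Ici.2 hT0 (hT ht)))
    (fun t ht => hgap t (hT ht)) fun t ht hδu => ?_
  -- `δ x ≥ 2 ε + δ` makes the damping `(x² - 1) δ` exceed the forcing `ε x` by at least `ε`
  have hxt := hs.one_lt_x h0 t (Ici_subset_Ici.2 hT0 (hT ht))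
  have hlarge : 2 * ε + δ ≤ δ * x t :=
    (div_le_iff₀' hδ).1 (hT' t ((le_max_right T T').trans ht))
  have hdamp : 0 ≤ (x t ^ 2 - 1) * (y t - x t - δ) := mul_nonneg (by nlinarith) (by linarith)
  nlinarith

theorem tendsto_gap (hε : 0 < ε) (hs : IsForwardSolution ε x y) (h0 : 1 < x 0) :
    Tendsto (fun t => y t - x t) atTop (𝓝 0) := by
  obtain ⟨T, -, hgap⟩ := hs.exists_forall_gap_nonneg hε h0
  refine tendsto_order.2
    ⟨fun b hb => eventually_atTop.2 ⟨T, fun t ht => hb.trans_le (hgap t ht)⟩,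
      fun δ hδ => (hs.eventually_gap_le hε h0 (half_pos hδ)).mono fun t ht => ?_⟩
  linarith

end IsForwardSolution

/-- Every global solution of `ẋ = (1 - x²)(x - y), ẏ = ε x` starting outside
the strip `|x| ≤ 1` is asymptotic to the line `y = x`. -/
theorem orbit_asymptotic_to_diagonal
    (ε : ℝ) (hε : 0 < ε) (x y : ℝ → ℝ)
    (hx : ∀ t ∈ Set.Ici (0 : ℝ), HasDerivAt x ((1 - x t ^ 2) * (x t - y t)) t)
    (hy : ∀ t ∈ Set.Ici (0 : ℝ), HasDerivAt y (ε * x t) t)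
    (hx0 : 1 < |x 0|) :
    Tendsto (fun t => y t - x t) atTop (𝓝 0) := by
  have hs : IsForwardSolution ε x y := ⟨hx, hy⟩
  rcases lt_abs.1 hx0 with h | h
  · exact hs.tendsto_gap hε h
  · simpa [← sub_eq_add_neg, add_comm] using (hs.neg.tendsto_gap hε h).neg
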